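/- Let c₂ := 2·B(β+1, β+1)·(2β+1)/(3(1−β)). Then the function f(s) := c₂·h(s)² = c₂·(s(1−s))^β satisfies Kf(s) = f(s) for every s ∈ [0,1], where Kf(s) := (2/(2β+1))·[∫_s^1 x^{2β}·f(s/x) dx + ∫_0^s (1−x)^{2β}·f((1−s)/(1−x)) dx] + 2·B(β+1, β+1)·h(s)²/(β+1). That is, c₂·h² is a fixed point of the second-moment integral operator K. -/

import Mathlib

/-!
For `0 ≤ s < x` one has `x^{2β} ((s/x)(1 - s/x))^β = s^β (x - s)^β`, so the first integral of
`K` applied to `(t(1-t))^β` is `s^β (1-s)^{β+1} / (β+1)`; the second is its mirror image under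
`s ↦ 1 - s`, and the two add up to `(s(1-s))^β / (β+1)`. The fixed-point equation thus reduces
to the scalar identity `2 c₂ / ((2β+1)(β+1)) + 2 B(β+1,β+1) / (β+1) = c₂`, which holds because
`(2β+1)(β+1) - 2 = 3(1-β)` when `(β+1)(β+2) = 4`.
-/

open MeasureTheory Real Set

/-- The exponent `β = (√17 - 3)/2`, the positive root of `(β+1)(β+2) = 4`. -/
noncomputable def β : ℝ := (Real.sqrt 17 - 3) / 2

/-- The scaling function `h(s) = (s(1-s))^{β/2}`. -/
noncomputable def h (s : ℝ) : ℝ := (s * (1 - s)) ^ (β / 2)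

/-- The Beta function `B(a,b) = ∫₀¹ t^{a-1}(1-t)^{b-1} dt`. -/
noncomputable def Bfun (a b : ℝ) : ℝ := ∫ t in (0:ℝ)..1, t ^ (a - 1) * (1 - t) ^ (b - 1)

/-- The second-moment integral operator `K`. -/
noncomputable def K (f : ℝ → ℝ) (s : ℝ) : ℝ :=
  (2 / (2 * β + 1)) *
      ((∫ x in s..1, x ^ (2 * β) * f (s / x)) +
        ∫ x in (0:ℝ)..s, (1 - x) ^ (2 * β) * f ((1 - s) / (1 - x)))
    + 2 * Bfun (β + 1) (β + 1) * (h s) ^ 2 / (β + 1)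

/-- The constant `c₂ = 2 B(β+1,β+1)(2β+1)/(3(1-β))`. -/
noncomputable def c₂ : ℝ := 2 * Bfun (β + 1) (β + 1) * (2 * β + 1) / (3 * (1 - β))

lemma beta_pos : 0 < β := by
  have := Real.sq_sqrt (by norm_num : (0:ℝ) ≤ 17)
  unfold β; nlinarith [Real.sqrt_nonneg 17]

lemma beta_lt_one : β < 1 := by
  have := Real.sq_sqrt (by norm_num : (0:ℝ) ≤ 17)
  unfold β; nlinarith [Real.sqrt_nonneg 17]

lemma beta_add_one_mul_beta_add_two : (β + 1) * (β + 2) = 4 := by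
  have := Real.sq_sqrt (by norm_num : (0:ℝ) ≤ 17)
  unfold β; nlinarith

lemma rpow_two_mul_mul_div_mul_one_sub_div_rpow {s x : ℝ} (a : ℝ) (hs : 0 ≤ s) (hsx : s < x) :
    x ^ (2 * a) * ((s / x) * (1 - s / x)) ^ a = s ^ a * (x - s) ^ a := by
  have hx : 0 < x := hs.trans_lt hsx
  have hprod : s / x * (1 - s / x) = s * (x - s) / x ^ 2 := by field_simp
  rw [hprod, Real.div_rpow (by nlinarith) (by positivity), ← Real.rpow_natCast_mul hx.le,
    Real.mul_rpow hs (by linarith)]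
  push_cast
  field_simp

lemma integral_rpow_sub_left {a : ℝ} (s : ℝ) (ha : -1 < a) :
    ∫ x in s..1, (x - s) ^ a = (1 - s) ^ (a + 1) / (a + 1) := by
  rw [intervalIntegral.integral_comp_sub_right (fun u => u ^ a), sub_self,
    integral_rpow (Or.inl ha), Real.zero_rpow (by linarith), sub_zero]

lemma integral_rpow_two_mul_mul_div_mul_one_sub_div_rpow {a s : ℝ} (ha : -1 < a)
    (hs0 : 0 ≤ s) (hs1 : s ≤ 1) :
    ∫ x in s..1, x ^ (2 * a) * ((s / x) * (1 - s / x)) ^ a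
      = s ^ a * (1 - s) ^ (a + 1) / (a + 1) := by
  have hcongr : ∀ᵐ x ∂volume, x ∈ uIoc s 1 →
      x ^ (2 * a) * ((s / x) * (1 - s / x)) ^ a = s ^ a * (x - s) ^ a := by
    refine Filter.Eventually.of_forall fun x hx => ?_
    rw [uIoc_of_le hs1] at hx
    exact rpow_two_mul_mul_div_mul_one_sub_div_rpow a hs0 hx.1
  rw [intervalIntegral.integral_congr_ae hcongr, intervalIntegral.integral_const_mul,
    integral_rpow_sub_left s ha, mul_div_assoc]

lemma integral_one_sub_rpow_two_mul_mul_div_mul_one_sub_div_rpow {a s : ℝ} (ha : -1 < a)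
    (hs0 : 0 ≤ s) (hs1 : s ≤ 1) :
    ∫ x in (0:ℝ)..s, (1 - x) ^ (2 * a) * (((1 - s) / (1 - x)) * (1 - (1 - s) / (1 - x))) ^ a
      = (1 - s) ^ a * s ^ (a + 1) / (a + 1) := by
  rw [intervalIntegral.integral_comp_sub_left
      (fun y => y ^ (2 * a) * (((1 - s) / y) * (1 - (1 - s) / y)) ^ a) 1, sub_zero,
    integral_rpow_two_mul_mul_div_mul_one_sub_div_rpow ha (by linarith) (by linarith), sub_sub_cancel]

lemma rpow_mul_one_sub_rpow_add_one_add {a s : ℝ} (ha : a + 1 ≠ 0) (hs0 : 0 ≤ s) (hs1 : s ≤ 1) :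
    s ^ a * (1 - s) ^ (a + 1) + (1 - s) ^ a * s ^ (a + 1) = (s * (1 - s)) ^ a := by
  rw [Real.rpow_add_one' hs0 ha, Real.rpow_add_one' (by linarith) ha,
    Real.mul_rpow hs0 (by linarith)]
  ring

lemma h_sq {s : ℝ} (hs0 : 0 ≤ s) (hs1 : s ≤ 1) : h s ^ 2 = (s * (1 - s)) ^ β := by
  rw [h, ← Real.rpow_mul_natCast (by nlinarith)]
  ring_nf

lemma c₂_fixed_point :
    2 / (2 * β + 1) * (c₂ / (β + 1)) + 2 * Bfun (β + 1) (β + 1) / (β + 1) = c₂ := by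
  have : 0 < β := beta_pos
  have : 1 - β ≠ 0 := by linarith [beta_lt_one]
  unfold c₂
  field_simp
  linear_combination (-2 * Bfun (β + 1) (β + 1)) * beta_add_one_mul_beta_add_two

/-- The function `s ↦ c₂ h(s)² = c₂ (s(1-s))^β` is a fixed point of the second-moment
integral operator `K` on `[0,1]`. -/
theorem second_moment_fixed_point :
    ∀ s ∈ Set.Icc (0 : ℝ) 1,
      K (fun t => c₂ * (t * (1 - t)) ^ β) s = c₂ * (s * (1 - s)) ^ β := by
  rintro s ⟨hs0, hs1⟩
  have ha : (-1 : ℝ) < β := by linarith [beta_pos]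
  simp only [K, mul_left_comm _ c₂, intervalIntegral.integral_const_mul]
  rw [integral_rpow_two_mul_mul_div_mul_one_sub_div_rpow ha hs0 hs1,
    integral_one_sub_rpow_two_mul_mul_div_mul_one_sub_div_rpow ha hs0 hs1, h_sq hs0 hs1,
    ← mul_add, ← add_div, rpow_mul_one_sub_rpow_add_one_add (by linarith) hs0 hs1]
  linear_combination (s * (1 - s)) ^ β * c₂_fixed_point
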